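/- For every influence I, every k ∈ ℕ, every depth-k local policy π, and every local state x ∈ X: max_{d∈D} ν^I_k(π)(x,d) ≤ ν^D_k(π)(x). That is, the influence-optimistic plan-time (Dec-POMDP) value vectors pointwise dominate the influence-induced value vectors of the influence-augmented sub-problem, uniformly over d-separating-set values. -/

import Mathlib

/-!
Induction on the horizon. Given `ν^I_k ≤ ν^D_k`, the nonnegative transition weights let us
replace `ν^I_k` by `ν^D_k` in the backup of `ν^I_{k+1}(π)(x,d)`, after which `d` enters only
through the mixture `Σ_u Pn(·|u) I(u|d)`. Exchanging sums turns that backup into the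
`I(·|d)`-average over `u` of the backups of `ν^D_k` with the influence source fixed to `u`,
and an average is at most the maximum that defines `ν^D_{k+1}`.
-/

open Finset

section LocalModel

variable {Xl Xn A O U D : Type*}
  [Fintype Xl] [Nonempty Xl] [Fintype Xn] [Nonempty Xn]
  [Fintype A] [Nonempty A] [Fintype O] [Nonempty O]
  [Fintype U] [Nonempty U] [Fintype D] [Nonempty D]

/-- Influence-induced value vectors `ν^I_k(π)(x,d)` of the influence-augmented
sub-problem. A depth-`k` local policy is a function `List O → A`; `π []` is its action
at the empty history and `fun h => π (o :: h)` is the subtree policy `π↓o`. -/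
noncomputable def nuI (Pl : Xl → (Xl × Xn) → A → ℝ) (Pn : Xn → (Xl × Xn) → A → U → ℝ)
    (Ω : O → A → (Xl × Xn) → ℝ) (δ : (Xl × Xn) → D → A → (Xl × Xn) → D)
    (r : A → (Xl × Xn) → ℝ) (I : D → U → ℝ) :
    ℕ → (List O → A) → (Xl × Xn) → D → ℝ
  | 0 => fun _ _ _ => 0
  | k + 1 => fun π x d =>
      r (π []) x + ∑ o : O, ∑ x' : Xl × Xn,
        Ω o (π []) x' * Pl x'.1 x (π []) *
          (∑ u : U, Pn x'.2 x (π []) u * I d u) *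
          nuI Pl Pn Ω δ r I k (fun h => π (o :: h)) x' (δ x d (π []) x')

/-- Influence-optimistic (IO, Q-MPOMDP style) value vectors `ν^IO_k(π)(x)`. -/
noncomputable def nuIO (Pl : Xl → (Xl × Xn) → A → ℝ) (Pn : Xn → (Xl × Xn) → A → U → ℝ)
    (Ω : O → A → (Xl × Xn) → ℝ) (r : A → (Xl × Xn) → ℝ) :
    ℕ → (List O → A) → (Xl × Xn) → ℝ
  | 0 => fun _ _ => 0
  | k + 1 => fun π x =>
      r (π []) x + ∑ o : O,
        Finset.univ.sup' Finset.univ_nonempty (fun u : U =>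
          ∑ x' : Xl × Xn,
            Ω o (π []) x' * Pl x'.1 x (π []) * Pn x'.2 x (π []) u *
              nuIO Pl Pn Ω r k (fun h => π (o :: h)) x')

end LocalModel

section LocalModel

variable {Xl Xn A O U D : Type*}
  [Fintype Xl] [Nonempty Xl] [Fintype Xn] [Nonempty Xn]
  [Fintype A] [Nonempty A] [Fintype O] [Nonempty O]
  [Fintype U] [Nonempty U] [Fintype D] [Nonempty D]

/-- Influence-optimistic plan-time (Dec-POMDP) value vectors `ν^D_k(π)(x)`. -/
noncomputable def nuD (Pl : Xl → (Xl × Xn) → A → ℝ) (Pn : Xn → (Xl × Xn) → A → U → ℝ)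
    (Ω : O → A → (Xl × Xn) → ℝ) (r : A → (Xl × Xn) → ℝ) :
    ℕ → (List O → A) → (Xl × Xn) → ℝ
  | 0 => fun _ _ => 0
  | k + 1 => fun π x =>
      r (π []) x +
        Finset.univ.sup' Finset.univ_nonempty (fun u : U =>
          ∑ o : O, ∑ x' : Xl × Xn,
            Ω o (π []) x' * Pl x'.1 x (π []) * Pn x'.2 x (π []) u *
              nuD Pl Pn Ω r k (fun h => π (o :: h)) x')

end LocalModel

theorem Finset.sum_mul_le_sup'_of_sum_eq_one {ι : Type*} {s : Finset ι} (hs : s.Nonempty)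
    {w g : ι → ℝ} (hw0 : ∀ i ∈ s, 0 ≤ w i) (hw1 : ∑ i ∈ s, w i = 1) :
    ∑ i ∈ s, w i * g i ≤ s.sup' hs g := by
  have h := centerMass_le_sup (f := g) hw0 (hw1 ▸ one_pos)
  rwa [centerMass_eq_of_sum_1 _ _ hw1] at h

section Domination

variable {Xl Xn A O U D : Type*} [Fintype Xl] [Fintype Xn] [Fintype O] [Fintype U] [Nonempty U]
  (Pl : Xl → (Xl × Xn) → A → ℝ) (Pn : Xn → (Xl × Xn) → A → U → ℝ)
  (Ω : O → A → (Xl × Xn) → ℝ) (r : A → (Xl × Xn) → ℝ)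

noncomputable def nuDGiven (k : ℕ) (π : List O → A) (x : Xl × Xn) (u : U) : ℝ :=
  ∑ o : O, ∑ x' : Xl × Xn,
    Ω o (π []) x' * Pl x'.1 x (π []) * Pn x'.2 x (π []) u *
      nuD Pl Pn Ω r k (fun h => π (o :: h)) x'

theorem nuD_succ (k : ℕ) (π : List O → A) (x : Xl × Xn) :
    nuD Pl Pn Ω r (k + 1) π x =
      r (π []) x + univ.sup' univ_nonempty (nuDGiven Pl Pn Ω r k π x) :=
  rfl

theorem nuI_succ_le_add_sum_mul_nuDGiven (δ : (Xl × Xn) → D → A → (Xl × Xn) → D)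
    (I : D → U → ℝ) (hPl0 : ∀ x'l x a, 0 ≤ Pl x'l x a)
    (hPn0 : ∀ x'n x a u, 0 ≤ Pn x'n x a u) (hΩ0 : ∀ o a x', 0 ≤ Ω o a x')
    (hI0 : ∀ d u, 0 ≤ I d u) (k : ℕ) (π : List O → A)
    (hk : ∀ o x' d', nuI Pl Pn Ω δ r I k (fun h => π (o :: h)) x' d' ≤
      nuD Pl Pn Ω r k (fun h => π (o :: h)) x')
    (x : Xl × Xn) (d : D) :
    nuI Pl Pn Ω δ r I (k + 1) π x d ≤
      r (π []) x + ∑ u : U, I d u * nuDGiven Pl Pn Ω r k π x u := by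
  calc nuI Pl Pn Ω δ r I (k + 1) π x d
    _ ≤ r (π []) x + ∑ o : O, ∑ x' : Xl × Xn,
          Ω o (π []) x' * Pl x'.1 x (π []) * (∑ u : U, Pn x'.2 x (π []) u * I d u) *
            nuD Pl Pn Ω r k (fun h => π (o :: h)) x' := by
      unfold nuI
      gcongr with o _ x' _
      · exact mul_nonneg (mul_nonneg (hΩ0 ..) (hPl0 ..))
          (sum_nonneg fun u _ => mul_nonneg (hPn0 ..) (hI0 ..))
      · exact hk ..
    _ = _ := by
      simp only [nuDGiven, mul_sum, sum_mul]
      rw [sum_comm_cycle]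
      exact congrArg _ <| sum_congr rfl fun u _ => sum_congr rfl fun o _ =>
        sum_congr rfl fun x' _ => by ring

theorem nuI_le_nuD_apply (δ : (Xl × Xn) → D → A → (Xl × Xn) → D) (I : D → U → ℝ)
    (hPl0 : ∀ x'l x a, 0 ≤ Pl x'l x a) (hPn0 : ∀ x'n x a u, 0 ≤ Pn x'n x a u)
    (hΩ0 : ∀ o a x', 0 ≤ Ω o a x') (hI0 : ∀ d u, 0 ≤ I d u) (hI1 : ∀ d, ∑ u : U, I d u = 1)
    (k : ℕ) (π : List O → A) (x : Xl × Xn) (d : D) :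
    nuI Pl Pn Ω δ r I k π x d ≤ nuD Pl Pn Ω r k π x := by
  induction k generalizing π x d with
  | zero => exact le_rfl
  | succ k ih =>
    calc nuI Pl Pn Ω δ r I (k + 1) π x d
        ≤ r (π []) x + ∑ u : U, I d u * nuDGiven Pl Pn Ω r k π x u :=
          nuI_succ_le_add_sum_mul_nuDGiven Pl Pn Ω r δ I hPl0 hPn0 hΩ0 hI0 k π
            (fun _ _ _ => ih ..) x d
      _ ≤ nuD Pl Pn Ω r (k + 1) π x := by
          rw [nuD_succ]
          gcongr
          exact sum_mul_le_sup'_of_sum_eq_one _ (fun u _ => hI0 d u) (hI1 d)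

end Domination

section LocalModel

variable {Xl Xn A O U D : Type*}
  [Fintype Xl] [Nonempty Xl] [Fintype Xn] [Nonempty Xn]
  [Fintype A] [Nonempty A] [Fintype O] [Nonempty O]
  [Fintype U] [Nonempty U] [Fintype D] [Nonempty D]

theorem nuI_le_nuD_general
    (Pl : Xl → (Xl × Xn) → A → ℝ) (Pn : Xn → (Xl × Xn) → A → U → ℝ)
    (Ω : O → A → (Xl × Xn) → ℝ) (δ : (Xl × Xn) → D → A → (Xl × Xn) → D)
    (r : A → (Xl × Xn) → ℝ)
    (hPl0 : ∀ x'l x a, 0 ≤ Pl x'l x a)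
    (hPn0 : ∀ x'n x a u, 0 ≤ Pn x'n x a u)
    (hΩ0 : ∀ o a x', 0 ≤ Ω o a x')
    (I : D → U → ℝ) (hI0 : ∀ d u, 0 ≤ I d u) (hI1 : ∀ d, ∑ u : U, I d u = 1)
    (k : ℕ) (π : List O → A) (x : Xl × Xn) :
    Finset.univ.sup' Finset.univ_nonempty (fun d : D => nuI Pl Pn Ω δ r I k π x d) ≤
      nuD Pl Pn Ω r k π x :=
  Finset.sup'_le _ _ fun d _ =>
    nuI_le_nuD_apply Pl Pn Ω r δ I hPl0 hPn0 hΩ0 hI0 hI1 k π x d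

/-- the influence-optimistic plan-time (Dec-POMDP) value vectors pointwise
dominate the influence-induced value vectors of the influence-augmented sub-problem,
uniformly over d-separating-set values. -/
theorem nuI_le_nuD
    (Pl : Xl → (Xl × Xn) → A → ℝ) (Pn : Xn → (Xl × Xn) → A → U → ℝ)
    (Ω : O → A → (Xl × Xn) → ℝ) (δ : (Xl × Xn) → D → A → (Xl × Xn) → D)
    (r : A → (Xl × Xn) → ℝ)
    (hPl0 : ∀ x'l x a, 0 ≤ Pl x'l x a) (hPl1 : ∀ x a, ∑ x'l : Xl, Pl x'l x a = 1)
    (hPn0 : ∀ x'n x a u, 0 ≤ Pn x'n x a u) (hPn1 : ∀ x a u, ∑ x'n : Xn, Pn x'n x a u = 1)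
    (hΩ0 : ∀ o a x', 0 ≤ Ω o a x') (hΩ1 : ∀ a x', ∑ o : O, Ω o a x' = 1)
    (I : D → U → ℝ) (hI0 : ∀ d u, 0 ≤ I d u) (hI1 : ∀ d, ∑ u : U, I d u = 1)
    (k : ℕ) (π : List O → A) (x : Xl × Xn) :
    Finset.univ.sup' Finset.univ_nonempty (fun d : D => nuI Pl Pn Ω δ r I k π x d) ≤
      nuD Pl Pn Ω r k π x :=
  nuI_le_nuD_general Pl Pn Ω δ r hPl0 hPn0 hΩ0 I hI0 hI1 k π x

end LocalModel
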